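/- arXiv:math/0603467 — 3 statements merged into one kernel-verified Lean document; each statement's English description precedes it below -/
import Mathlib

section
/- With N, q, the matrices M_U, M_V, M_W, and the matrix C_R = C_R(u,v,u′,v′,h) as in the context, suppose u, v, h, u′, v′ are nonzero complex numbers with u^N ≠ −1, (u′)^N = h^N / (u^N·v^N·(1 + u^{−N})²), and (v′)^N = (1 + u^N)²·v^N. Then the following three matrix identities hold: (a) M_W(u,v,h)·C_R = (1 + q·M_U(u)⁻¹)·(1 + q³·M_U(u)⁻¹)·C_R·M_U(u′); (b) (1 + q·M_U(u))·(1 + q³·M_U(u))·M_V(v)·C_R = C_R·M_V(v′); (c) M_U(u)·C_R·M_W(u′,v′,h) = C_R. -/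
open Matrix

/-- The image of the generator `U` of the Chekhov–Fock algebra of the once-punctured torus
under the standard representation: the diagonal matrix with entries `u·q^{4i}`. -/
noncomputable def MU (N : ℕ) (q u : ℂ) : Matrix (Fin N) (Fin N) ℂ :=
  Matrix.diagonal fun i => u * q ^ (4 * (i : ℕ))

/-- The image of the generator `V`: the cyclic shift matrix with entries `v`. -/
noncomputable def MV (N : ℕ) (v : ℂ) : Matrix (Fin N) (Fin N) ℂ :=
  Matrix.of fun i j => if (j : ℕ) = ((i : ℕ) + 1) % N then v else 0

/-- The image of the generator `W`: `q⁻²·h·(M_U(u)·M_V(v))⁻¹`. -/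
noncomputable def MW (N : ℕ) (q u v h : ℂ) : Matrix (Fin N) (Fin N) ℂ :=
  ((q ^ 2)⁻¹ * h) • (MU N q u * MV N v)⁻¹

/-- The intertwining matrix `C_R(u,v,u′,v′,h)`, with `(i,j)`-entry
`q^{2(j−i)²}·(u′v′/(uh))^{j−i}·(v′/v)^i·∏_{α=1}^{i}[(1+q^{4α−3}u)(1+q^{4α−1}u)]⁻¹`. -/
noncomputable def CR (N : ℕ) (q u v u' v' h : ℂ) : Matrix (Fin N) (Fin N) ℂ :=
  Matrix.of fun i j =>
    q ^ (2 * ((j : ℤ) - (i : ℤ)) ^ 2) *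
      (u' * v' / (u * h)) ^ ((j : ℤ) - (i : ℤ)) *
      (v' / v) ^ (i : ℕ) *
      ∏ α ∈ Finset.range (i : ℕ),
        ((1 + q ^ (4 * α + 1) * u) * (1 + q ^ (4 * α + 3) * u))⁻¹

/-! Writing `A = u′v′/(uh)`, `B = v′/v` and `D_m = (1+q^{4m+1}u)(1+q^{4m+3}u)`, the entry of
`C_R` factors as `c(j−i)·r(i)` with `c(k) = q^{2k²}A^k` and `r(i) = B^i ∏_{α<i} D_α⁻¹`. The
conditions on `u′^N` and `v′^N` give `A^N = 1` and `B^N = (1+u^N)² = ∏_{α<N} D_α` (as `q⁴` is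
again a primitive `N`-th root of unity and `N` is odd), so `c` is `N`-periodic and `r(N) = r(0)`.
Hence `C_R` satisfies a first-order recurrence in each index that is valid cyclically, and since
`M_V` shifts indices by one, each of the three identities, read entrywise, is one of these
recurrences or a combination of both. The identities involving `M_W` are checked after
multiplying by `M_U M_V`. -/

open Finset

lemma IsPrimitiveRoot.prod_range_one_add_pow_mul {R : Type*} [CommRing R] [IsDomain R]
    {ζ : R} {N : ℕ} (hζ : IsPrimitiveRoot ζ N) (hN : Odd N) (x : R) :
    ∏ α ∈ range N, (1 + ζ ^ α * x) = 1 + x ^ N := by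
  have h := congrArg (Polynomial.eval 1)
    (X_pow_sub_C_eq_prod hζ hN.pos (rfl : (-x) ^ N = (-x) ^ N))
  simp only [Polynomial.eval_prod, Polynomial.eval_sub, Polynomial.eval_pow, Polynomial.eval_X,
    Polynomial.eval_C, one_pow, hN.neg_pow, sub_neg_eq_add, mul_neg] at h
  exact h.symm

lemma Fin.apply_val_add_one {α : Type*} {n : ℕ} {f : ℕ → α} (hf : f (n + 1) = f 0)
    (i : Fin (n + 1)) : f ((i + 1 : Fin (n + 1)) : ℕ) = f (i + 1) := by
  rw [Fin.val_add_one]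
  split_ifs with hi
  · rw [hi, Fin.val_last, hf]
  · rfl

noncomputable section Factors

variable {q u A B : ℂ}

def colFactor (q A : ℂ) (k : ℤ) : ℂ := q ^ (2 * k ^ 2) * A ^ k

def pairFactor (q u : ℂ) (m : ℕ) : ℂ := (1 + q ^ (4 * m + 1) * u) * (1 + q ^ (4 * m + 3) * u)

def rowFactor (q u B : ℂ) (m : ℕ) : ℂ := B ^ m * ∏ α ∈ range m, (pairFactor q u α)⁻¹

lemma colFactor_add_one (hq : q ≠ 0) (hA : A ≠ 0) (k : ℤ) :
    colFactor q A (k + 1) = colFactor q A k * (A * q ^ (4 * k + 2)) := by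
  rw [colFactor, colFactor, show 2 * (k + 1) ^ 2 = 2 * k ^ 2 + (4 * k + 2) by ring,
    zpow_add₀ hq, zpow_add_one₀ hA]
  ring

lemma colFactor_periodic {N : ℕ} (hq : q ≠ 0) (hA : A ≠ 0) (hqN : q ^ N = 1) (hAN : A ^ N = 1) :
    Function.Periodic (colFactor q A) N := by
  intro k
  rw [colFactor, colFactor, show 2 * (k + N) ^ 2 = 2 * k ^ 2 + N * (4 * k + 2 * N) by ring,
    zpow_add₀ hq, zpow_add₀ hA, _root_.zpow_mul q N, zpow_natCast, zpow_natCast, hqN, hAN]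
  simp

lemma rowFactor_succ_mul_pairFactor {m : ℕ} (hm : pairFactor q u m ≠ 0) :
    rowFactor q u B (m + 1) * pairFactor q u m = rowFactor q u B m * B := by
  rw [rowFactor, rowFactor, prod_range_succ, pow_succ]
  field_simp

lemma rowFactor_eq_one {N : ℕ} (hpair : ∀ m, pairFactor q u m ≠ 0)
    (hBN : B ^ N = ∏ α ∈ range N, pairFactor q u α) : rowFactor q u B N = 1 := by
  rw [rowFactor, prod_inv_distrib, hBN, mul_inv_cancel₀ (prod_ne_zero_iff.mpr fun m _ => hpair m)]

lemma one_add_pow_mul_ne_zero {N : ℕ} (hN : Odd N) (hqN : q ^ N = 1) (hun : u ^ N ≠ -1)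
    (k : ℕ) : 1 + q ^ k * u ≠ 0 := by
  intro h0
  have h := congrArg (· ^ N) (eq_neg_of_add_eq_zero_right h0)
  rw [mul_pow, ← pow_mul, mul_comm k, pow_mul, hqN, one_pow, one_mul, hN.neg_one_pow] at h
  exact hun h

lemma prod_range_pairFactor {N : ℕ} (hq : IsPrimitiveRoot q N) (hN : Odd N) :
    ∏ α ∈ range N, pairFactor q u α = (1 + u ^ N) ^ 2 := by
  have hq4 : IsPrimitiveRoot (q ^ 4) N :=
    hq.pow_of_coprime 4 (by simpa using (Nat.coprime_two_left.mpr hN).pow_left 2)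
  have hshift (s : ℕ) : ∏ α ∈ range N, (1 + q ^ (4 * α + s) * u) = 1 + u ^ N := by
    simp only [pow_add, pow_mul, mul_assoc]
    rw [hq4.prod_range_one_add_pow_mul hN, mul_pow, ← pow_mul, mul_comm s, pow_mul,
      hq.pow_eq_one, one_pow, one_mul]
  simp only [pairFactor, prod_mul_distrib, hshift, sq]

end Factors

lemma CR_apply_eq_colFactor_mul_rowFactor (N : ℕ) (q u v u' v' h : ℂ) (i j : Fin N) :
    CR N q u v u' v' h i j =
      colFactor q (u' * v' / (u * h)) ((j : ℤ) - (i : ℤ)) * rowFactor q u (v' / v) i := by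
  simp only [CR, of_apply, colFactor, rowFactor, pairFactor, mul_assoc]

section Recurrences

variable {n : ℕ} {q u v h u' v' : ℂ}

lemma CR_apply_add_one_right (hq : q ≠ 0) (hA : u' * v' / (u * h) ≠ 0) (hqN : q ^ (n + 1) = 1)
    (hAN : (u' * v' / (u * h)) ^ (n + 1) = 1) (i j : Fin (n + 1)) :
    CR (n + 1) q u v u' v' h i (j + 1) * q ^ (4 * (i : ℕ))
      = CR (n + 1) q u v u' v' h i j * (u' * v' / (u * h)) * q ^ (4 * (j : ℕ)) * q ^ 2 := by
  set A := u' * v' / (u * h)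
  have hcol : colFactor q A (((j + 1 : Fin (n + 1)) : ℕ) - (i : ℕ))
      = colFactor q A ((j : ℕ) + 1 - (i : ℕ)) :=
    Fin.apply_val_add_one (f := fun m : ℕ => colFactor q A (m - (i : ℕ)))
      (by simpa [sub_eq_neg_add] using colFactor_periodic hq hA hqN hAN (-(i : ℤ))) j
  have hexp : q ^ (4 * ((j : ℤ) - (i : ℤ)) + 2) * q ^ (4 * (i : ℕ))
      = q ^ (4 * (j : ℕ)) * q ^ 2 := by
    simp only [← zpow_natCast, ← zpow_add₀ hq]
    congr 1
    push_cast
    ring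
  rw [CR_apply_eq_colFactor_mul_rowFactor, CR_apply_eq_colFactor_mul_rowFactor, hcol,
    show ((j : ℕ) : ℤ) + 1 - (i : ℕ) = ((j : ℤ) - (i : ℤ)) + 1 by ring, colFactor_add_one hq hA]
  linear_combination colFactor q A ((j : ℤ) - (i : ℤ)) * rowFactor q u (v' / v) i * A * hexp

lemma CR_apply_add_one_left (hq : q ≠ 0) (hA : u' * v' / (u * h) ≠ 0) (hqN : q ^ (n + 1) = 1)
    (hAN : (u' * v' / (u * h)) ^ (n + 1) = 1) (hpair : ∀ m, pairFactor q u m ≠ 0)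
    (hBN : (v' / v) ^ (n + 1) = ∏ α ∈ range (n + 1), pairFactor q u α) (i j : Fin (n + 1)) :
    CR (n + 1) q u v u' v' h i j * (v' / v) * q ^ (4 * (i : ℕ)) * q ^ 2
      = CR (n + 1) q u v u' v' h (i + 1) j * pairFactor q u i * (u' * v' / (u * h))
        * q ^ (4 * (j : ℕ)) := by
  set A := u' * v' / (u * h)
  set B := v' / v
  have hcol : colFactor q A ((j : ℕ) - ((i + 1 : Fin (n + 1)) : ℕ))
      = colFactor q A ((j : ℕ) - ((i : ℕ) + 1)) :=
    Fin.apply_val_add_one (f := fun m : ℕ => colFactor q A ((j : ℕ) - m))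
      (by simpa using (colFactor_periodic hq hA hqN hAN).sub_eq ((j : ℕ) : ℤ)) i
  have hrow : rowFactor q u B ((i + 1 : Fin (n + 1)) : ℕ) = rowFactor q u B ((i : ℕ) + 1) :=
    Fin.apply_val_add_one (by rw [rowFactor_eq_one hpair hBN]; simp [rowFactor]) i
  have hexp : q ^ (4 * ((j : ℤ) - ((i : ℕ) + 1)) + 2) * q ^ (4 * (i : ℕ)) * q ^ 2
      = q ^ (4 * (j : ℕ)) := by
    simp only [← zpow_natCast, ← zpow_add₀ hq]
    congr 1
    push_cast
    ring
  rw [CR_apply_eq_colFactor_mul_rowFactor, CR_apply_eq_colFactor_mul_rowFactor, hcol, hrow,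
    show ((j : ℕ) : ℤ) - (i : ℕ) = ((j : ℤ) - ((i : ℕ) + 1)) + 1 by ring, colFactor_add_one hq hA]
  linear_combination colFactor q A ((j : ℤ) - ((i : ℕ) + 1)) * A * rowFactor q u B i * B * hexp
    - colFactor q A ((j : ℤ) - ((i : ℕ) + 1)) * A * q ^ (4 * (j : ℕ))
      * rowFactor_succ_mul_pairFactor (B := B) (hpair i)

end Recurrences

section Matrices

variable {n : ℕ} {q u v h : ℂ}

lemma MV_eq_smul_toMatrix :
    MV (n + 1) v = v • (finRotate (n + 1)).toPEquiv.toMatrix := by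
  ext i j
  simp [MV, PEquiv.toMatrix_apply, finRotate_apply, Fin.ext_iff, Fin.val_add, eq_comm]

lemma MV_mul_apply (M : Matrix (Fin (n + 1)) (Fin (n + 1)) ℂ) (i j : Fin (n + 1)) :
    (MV (n + 1) v * M) i j = v * M (i + 1) j := by
  rw [MV_eq_smul_toMatrix, smul_mul, Matrix.smul_apply, PEquiv.toMatrix_toPEquiv_mul,
    submatrix_apply, finRotate_apply, smul_eq_mul, id]

lemma mul_MV_apply_add_one (M : Matrix (Fin (n + 1)) (Fin (n + 1)) ℂ) (i j : Fin (n + 1)) :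
    (M * MV (n + 1) v) i (j + 1) = v * M i j := by
  rw [MV_eq_smul_toMatrix, Matrix.mul_smul, Matrix.smul_apply, PEquiv.mul_toMatrix_toPEquiv,
    submatrix_apply, (Equiv.symm_apply_eq _).mpr (finRotate_apply j).symm, smul_eq_mul, id]

lemma isUnit_det_MU_mul_MV (hq : q ≠ 0) (hu : u ≠ 0) (hv : v ≠ 0) :
    IsUnit (MU (n + 1) q u * MV (n + 1) v).det := by
  rw [det_mul, MU, MV_eq_smul_toMatrix, det_diagonal, det_smul, ← Equiv.Perm.permMatrix,
    det_permutation, isUnit_iff_ne_zero]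
  simp [prod_ne_zero_iff, hq, hu, hv]

lemma MW_mul_eq_of_smul_eq {N : ℕ} (hM : IsUnit (MU N q u * MV N v).det)
    {X Y : Matrix (Fin N) (Fin N) ℂ} (hXY : ((q ^ 2)⁻¹ * h) • X = MU N q u * MV N v * Y) :
    MW N q u v h * X = Y := by
  rw [MW, smul_mul, ← Matrix.mul_smul, hXY, nonsing_inv_mul_cancel_left _ _ hM]

lemma mul_MW_eq_of_smul_eq {N : ℕ} (hM : IsUnit (MU N q u * MV N v).det)
    {X Y : Matrix (Fin N) (Fin N) ℂ} (hXY : ((q ^ 2)⁻¹ * h) • X = Y * (MU N q u * MV N v)) :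
    X * MW N q u v h = Y := by
  rw [MW, Matrix.mul_smul, ← smul_mul, hXY, mul_nonsing_inv_cancel_right _ _ hM]

lemma one_add_smul_diagonal {N : ℕ} (c : ℂ) (d : Fin N → ℂ) :
    1 + c • diagonal d = diagonal fun i => 1 + c * d i := by
  ext i j
  by_cases hij : i = j <;> simp [hij, one_apply]

lemma MU_inv {N : ℕ} (hq : q ≠ 0) (hu : u ≠ 0) :
    (MU N q u)⁻¹ = diagonal fun i : Fin N => (u * q ^ (4 * (i : ℕ)))⁻¹ := by
  refine inv_eq_left_inv ?_
  rw [MU, diagonal_mul_diagonal, ← diagonal_one]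
  congr 1
  funext i
  exact inv_mul_cancel₀ (by simp [hq, hu])

end Matrices

section Intertwining

variable {n : ℕ} {q u v h u' v' : ℂ}

lemma pow_four_mul_val_add_one (hqN : q ^ (n + 1) = 1) (i : Fin (n + 1)) :
    q ^ (4 * ((i + 1 : Fin (n + 1)) : ℕ)) = q ^ (4 * (i : ℕ)) * q ^ 4 := by
  rw [Fin.apply_val_add_one (f := fun m => q ^ (4 * m)) (by simp [pow_mul', hqN]), mul_add,
    pow_add, mul_one]

lemma CR_intertwines_U (hq : q ≠ 0) (hu : u ≠ 0) (hv : v ≠ 0) (hh : h ≠ 0) (hu' : u' ≠ 0)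
    (hv' : v' ≠ 0) (hqN : q ^ (n + 1) = 1)
    (hAN : (u' * v' / (u * h)) ^ (n + 1) = 1) (hpair : ∀ m, pairFactor q u m ≠ 0)
    (hBN : (v' / v) ^ (n + 1) = ∏ α ∈ range (n + 1), pairFactor q u α) :
    MW (n + 1) q u v h * CR (n + 1) q u v u' v' h
      = (1 + q • (MU (n + 1) q u)⁻¹) * (1 + q ^ 3 • (MU (n + 1) q u)⁻¹)
        * CR (n + 1) q u v u' v' h * MU (n + 1) q u' := by
  have hA : u' * v' / (u * h) ≠ 0 := by simp [hu, hh, hu', hv']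
  refine MW_mul_eq_of_smul_eq (isUnit_det_MU_mul_MV hq hu hv) ?_
  ext i j
  have hC : CR (n + 1) q u v u' v' h i j
      = CR (n + 1) q u v u' v' h (i + 1) j * pairFactor q u i * (u' * v' / (u * h))
        * q ^ (4 * (j : ℕ)) / (v' / v * q ^ (4 * (i : ℕ)) * q ^ 2) := by
    rw [eq_div_iff (by simp [hq, hv, hv'])]
    linear_combination CR_apply_add_one_left hq hA hqN hAN hpair hBN i j
  rw [MU_inv hq hu, one_add_smul_diagonal, one_add_smul_diagonal, diagonal_mul_diagonal,
    Matrix.mul_assoc, MU, MU, diagonal_mul, MV_mul_apply, mul_diagonal, diagonal_mul,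
    Matrix.smul_apply, pow_four_mul_val_add_one hqN, smul_eq_mul, hC, pairFactor]
  field_simp
  ring

lemma one_add_smul_MU_mul_one_add_smul_MU :
    (1 + q • MU (n + 1) q u) * (1 + q ^ 3 • MU (n + 1) q u)
      = diagonal fun i : Fin (n + 1) => pairFactor q u i := by
  rw [MU, one_add_smul_diagonal, one_add_smul_diagonal, diagonal_mul_diagonal]
  congr 1
  funext i
  rw [pairFactor]
  ring

lemma CR_intertwines_V (hq : q ≠ 0) (hu : u ≠ 0) (hv : v ≠ 0) (hh : h ≠ 0) (hu' : u' ≠ 0)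
    (hv' : v' ≠ 0) (hqN : q ^ (n + 1) = 1)
    (hAN : (u' * v' / (u * h)) ^ (n + 1) = 1) (hpair : ∀ m, pairFactor q u m ≠ 0)
    (hBN : (v' / v) ^ (n + 1) = ∏ α ∈ range (n + 1), pairFactor q u α) :
    (1 + q • MU (n + 1) q u) * (1 + q ^ 3 • MU (n + 1) q u) * MV (n + 1) v
        * CR (n + 1) q u v u' v' h
      = CR (n + 1) q u v u' v' h * MV (n + 1) v' := by
  have hA : u' * v' / (u * h) ≠ 0 := by simp [hu, hh, hu', hv']
  ext i j
  obtain ⟨j, rfl⟩ : ∃ k, j = k + 1 := ⟨j - 1, (sub_add_cancel j 1).symm⟩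
  have hrow := CR_apply_add_one_left hq hA hqN hAN hpair hBN i (j + 1)
  rw [pow_four_mul_val_add_one hqN] at hrow
  have hC : CR (n + 1) q u v u' v' h (i + 1) (j + 1)
      = CR (n + 1) q u v u' v' h i (j + 1) * (v' / v) * q ^ (4 * (i : ℕ)) * q ^ 2
        / (pairFactor q u i * (u' * v' / (u * h)) * (q ^ (4 * (j : ℕ)) * q ^ 4)) := by
    rw [eq_div_iff (by simp [hq, hA, hpair])]
    linear_combination -hrow
  have hC' : CR (n + 1) q u v u' v' h i (j + 1)
      = CR (n + 1) q u v u' v' h i j * (u' * v' / (u * h)) * q ^ (4 * (j : ℕ)) * q ^ 2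
        / q ^ (4 * (i : ℕ)) := by
    rw [eq_div_iff (by simp [hq])]
    exact CR_apply_add_one_right hq hA hqN hAN i j
  rw [one_add_smul_MU_mul_one_add_smul_MU, Matrix.mul_assoc, diagonal_mul, MV_mul_apply,
    mul_MV_apply_add_one, hC, hC']
  field_simp [hpair i]

lemma CR_intertwines_W (hq : q ≠ 0) (hu : u ≠ 0) (hh : h ≠ 0) (hu' : u' ≠ 0) (hv' : v' ≠ 0)
    (hqN : q ^ (n + 1) = 1) (hAN : (u' * v' / (u * h)) ^ (n + 1) = 1) :
    MU (n + 1) q u * CR (n + 1) q u v u' v' h * MW (n + 1) q u' v' h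
      = CR (n + 1) q u v u' v' h := by
  have hA : u' * v' / (u * h) ≠ 0 := by simp [hu, hh, hu', hv']
  refine mul_MW_eq_of_smul_eq (isUnit_det_MU_mul_MV hq hu' hv') ?_
  ext i j
  obtain ⟨j, rfl⟩ : ∃ k, j = k + 1 := ⟨j - 1, (sub_add_cancel j 1).symm⟩
  have hC : CR (n + 1) q u v u' v' h i (j + 1)
      = CR (n + 1) q u v u' v' h i j * (u' * v' / (u * h)) * q ^ (4 * (j : ℕ)) * q ^ 2
        / q ^ (4 * (i : ℕ)) := by
    rw [eq_div_iff (by simp [hq])]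
    exact CR_apply_add_one_right hq hA hqN hAN i j
  rw [Matrix.smul_apply, MU, MU, diagonal_mul, ← Matrix.mul_assoc, mul_MV_apply_add_one,
    mul_diagonal, hC, smul_eq_mul]
  field_simp

end Intertwining

/-- The matrix `C_R` intertwines the representation `χ_{u′,v′,h}` with `χ_{u,v,h} ∘ ℛ`. -/
theorem stmt8 (N : ℕ) (hN : Odd N) (hNpos : 0 < N) (q : ℂ) (hq : IsPrimitiveRoot q N)
    (u v h u' v' : ℂ) (hu : u ≠ 0) (hv : v ≠ 0) (hh : h ≠ 0)
    (hu' : u' ≠ 0) (hv' : v' ≠ 0) (hun : u ^ N ≠ -1)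
    (hu'N : u' ^ N = h ^ N / (u ^ N * v ^ N * (1 + (u ^ N)⁻¹) ^ 2))
    (hv'N : v' ^ N = (1 + u ^ N) ^ 2 * v ^ N) :
    MW N q u v h * CR N q u v u' v' h
      = (1 + q • (MU N q u)⁻¹) * (1 + q ^ 3 • (MU N q u)⁻¹) * CR N q u v u' v' h * MU N q u' ∧
    (1 + q • MU N q u) * (1 + q ^ 3 • MU N q u) * MV N v * CR N q u v u' v' h
      = CR N q u v u' v' h * MV N v' ∧
    MU N q u * CR N q u v u' v' h * MW N q u' v' h = CR N q u v u' v' h := by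
  obtain ⟨n, rfl⟩ := Nat.exists_eq_add_one_of_ne_zero hNpos.ne'
  have hq0 : q ≠ 0 := hq.ne_zero n.succ_ne_zero
  have hqN : q ^ (n + 1) = 1 := hq.pow_eq_one
  have hpair (m : ℕ) : pairFactor q u m ≠ 0 :=
    mul_ne_zero (one_add_pow_mul_ne_zero hN hqN hun _) (one_add_pow_mul_ne_zero hN hqN hun _)
  have hu1 : 1 + u ^ (n + 1) ≠ 0 := fun h0 => hun (eq_neg_of_add_eq_zero_right h0)
  have hAN : (u' * v' / (u * h)) ^ (n + 1) = 1 := by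
    have hinv : 1 + (u ^ (n + 1))⁻¹ = (1 + u ^ (n + 1)) / u ^ (n + 1) := by
      field_simp
      ring
    rw [div_pow, mul_pow, mul_pow, hu'N, hv'N, hinv]
    field_simp
  have hBN : (v' / v) ^ (n + 1) = ∏ α ∈ range (n + 1), pairFactor q u α := by
    rw [prod_range_pairFactor hq hN, div_pow, hv'N]
    field_simp
  exact ⟨CR_intertwines_U hq0 hu hv hh hu' hv' hqN hAN hpair hBN,
    CR_intertwines_V hq0 hu hv hh hu' hv' hqN hAN hpair hBN,
    CR_intertwines_W hq0 hu hh hu' hv' hqN hAN⟩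
end

section
/- With N, q, and the matrices M_U, M_V, M_W as in the context, let u, v, h be nonzero complex numbers with v^N ≠ −1 (so that the matrices 1 + q·M_V(v), 1 + q³·M_V(v), 1 + q·M_V(v)⁻¹, and 1 + q³·M_V(v)⁻¹ are all invertible). Define L_U := (1 + q·M_V(v)⁻¹)⁻¹·(1 + q³·M_V(v)⁻¹)⁻¹·M_U(u), L_V := (1 + q·M_V(v))·(1 + q³·M_V(v))·M_W(u,v,h), and L_W := M_V(v)⁻¹. Then L_V·L_U = q⁴·L_U·L_V, L_W·L_V = q⁴·L_V·L_W, L_U·L_W = q⁴·L_W·L_U, and q²·L_U·L_V·L_W = h·I, where I is the N×N identity matrix. -/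
/-!
Conjugation by `M_U` rescales `M_V` by `q⁴`, hence `M_U (1 + a M_V) = b⁻¹ (1 + b M_V⁻¹) M_V M_U`
whenever `ab = q⁴`. With `(a, b) = (q, q³)` the two factors of `L_V` pass through `M_U` and turn
into exactly the two factors that `L_U` inverts, which leaves `L_U L_V = q⁻² h M_V`: this is the
central relation. The prefactor of `L_U` commutes with `L_W = M_V⁻¹`, so `L_U` and `L_W`
`q⁴`-commute like `M_U` and `M_V⁻¹`. The other two relations are then formal: if `xyz` is a
scalar and `x, z` are invertible, `xz = t zx` forces `yx = t xy` and `zy = t yz`.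

The factors `1 + d M_V⁻¹` (`d^N = 1`) are invertible because `(d M_V⁻¹)^N = v^{-N}` is a
scalar `≠ -1` and `N` is odd, so the geometric series in `-d M_V⁻¹` inverts them.
-/

open Matrix

section CyclicRelations

variable {K R : Type*} [CommSemiring K] [Semiring R] [Algebra K R]

theorem mul_eq_smul_one_comm_of_isUnit_left {a b : R} {c : K} (ha : IsUnit a)
    (h : a * b = c • 1) : b * a = c • 1 := by
  obtain ⟨a, rfl⟩ := ha
  have hb : b = c • ↑a⁻¹ := by
    rw [← one_mul b, ← a.inv_mul, mul_assoc, h, mul_smul_comm, mul_one]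
  rw [hb, smul_mul_assoc, a.inv_mul]

theorem mul_eq_smul_one_comm_of_isUnit_right {a b : R} {c : K} (hb : IsUnit b)
    (h : a * b = c • 1) : b * a = c • 1 := by
  obtain ⟨b, rfl⟩ := hb
  have ha : a = c • ↑b⁻¹ := by
    rw [← mul_one a, ← b.mul_inv, ← mul_assoc, h, smul_mul_assoc, one_mul]
  rw [ha, mul_smul_comm, b.mul_inv]

theorem mul_eq_smul_mul_swap_of_mul_mul_eq_smul_one {x y z : R} {c t : K} (hx : IsUnit x)
    (hz : IsUnit z) (hxz : x * z = t • (z * x)) (hxyz : x * y * z = c • 1) :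
    y * x = t • (x * y) ∧ z * y = t • (y * z) := by
  have hyzx : y * z * x = c • 1 :=
    mul_eq_smul_one_comm_of_isUnit_left hx (by rw [← mul_assoc, hxyz])
  have hzxy : z * (x * y) = c • 1 := mul_eq_smul_one_comm_of_isUnit_right hz hxyz
  constructor
  · apply hz.mul_right_cancel
    calc y * x * z = t • (y * z * x) := by
          rw [mul_assoc, hxz, mul_smul_comm, ← mul_assoc]
      _ = t • (x * y) * z := by rw [hyzx, smul_mul_assoc, hxyz]
  · apply hx.mul_left_cancel
    calc x * (z * y) = t • (z * (x * y)) := by rw [← mul_assoc, hxz, smul_mul_assoc, mul_assoc]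
      _ = x * (t • (y * z)) := by rw [hzxy, mul_smul_comm, ← mul_assoc, hxyz]

end CyclicRelations

theorem isUnit_one_add_of_pow_eq_smul_one {K R : Type*} [Field K] [Ring R] [Algebra K R]
    {B : R} {m : ℕ} (hm : Odd m) {w : K} (hB : B ^ m = w • 1) (hw : 1 + w ≠ 0) :
    IsUnit (1 + B) := by
  have hgeom : 1 - (-B) ^ m = (1 + w) • (1 : R) := by
    rw [hm.neg_pow, hB, sub_neg_eq_add, add_smul, one_smul]
  refine isUnit_iff_exists.2 ⟨(1 + w)⁻¹ • ∑ i ∈ Finset.range m, (-B) ^ i, ?_, ?_⟩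
  · rw [mul_smul_comm, ← sub_neg_eq_add 1 B, mul_neg_geom_sum, hgeom, smul_smul,
      inv_mul_cancel₀ hw, one_smul]
  · rw [smul_mul_assoc, ← sub_neg_eq_add 1 B, geom_sum_mul_neg, hgeom, smul_smul,
      inv_mul_cancel₀ hw, one_smul]

namespace Matrix

variable {n K : Type*} [Fintype n] [DecidableEq n] [Field K] {U V : Matrix n n K}

theorem commute_nonsing_inv_self (hV : IsUnit V.det) : Commute V V⁻¹ :=
  (mul_nonsing_inv V hV).trans (nonsing_inv_mul V hV).symm

theorem commute_one_add_smul_nonsing_inv (hV : IsUnit V.det) (a : K) :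
    Commute V (1 + a • V⁻¹) :=
  (Commute.one_right V).add_right ((commute_nonsing_inv_self hV).smul_right a)

theorem mul_nonsing_inv_eq_smul_of_mul_eq_smul {t : K} (hV : IsUnit V.det)
    (h : V * U = t • (U * V)) : U * V⁻¹ = t • (V⁻¹ * U) := by
  calc U * V⁻¹ = V⁻¹ * (V * U) * V⁻¹ := by rw [← mul_assoc, nonsing_inv_mul V hV, one_mul]
    _ = t • (V⁻¹ * U) := by
      rw [h, mul_smul_comm, smul_mul_assoc, mul_assoc, mul_assoc, mul_nonsing_inv V hV, mul_one]

theorem mul_one_add_smul_of_mul_eq_smul {a b : K} (hV : IsUnit V.det) (hb : b ≠ 0)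
    (h : V * U = (a * b) • (U * V)) :
    U * (1 + a • V) = b⁻¹ • ((1 + b • V⁻¹) * V * U) := by
  rw [add_mul (1 : Matrix n n K), one_mul, smul_mul_assoc, nonsing_inv_mul V hV, add_mul,
    smul_add, smul_mul_assoc, one_mul, smul_smul, inv_mul_cancel₀ hb, one_smul, h, smul_smul,
    mul_add, mul_one, mul_smul_comm, add_comm]
  congr 2
  field_simp

theorem _root_.Commute.nonsing_inv_nonsing_inv {A B : Matrix n n K} (h : Commute A B) :
    Commute A⁻¹ B⁻¹ := by
  simpa only [nonsing_inv_eq_ringInverse] using h.ringInverse_ringInverse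

theorem mul_mul_nonsing_inv_eq_smul_of_mul_eq_smul {t : K} {F : Matrix n n K}
    (hV : IsUnit V.det) (h : V * U = t • (U * V)) (hF : Commute V⁻¹ F) :
    F * U * V⁻¹ = t • (V⁻¹ * (F * U)) := by
  rw [mul_assoc, mul_nonsing_inv_eq_smul_of_mul_eq_smul hV h, mul_smul_comm, ← mul_assoc,
    ← hF.eq, mul_assoc]

theorem mul_one_add_smul_mul_one_add_smul_of_mul_eq_smul {a b : K} (hV : IsUnit V.det)
    (ha : a ≠ 0) (hb : b ≠ 0) (h : V * U = (a * b) • (U * V)) :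
    U * ((1 + a • V) * (1 + b • V)) =
      (a * b)⁻¹ • ((1 + b • V⁻¹) * (1 + a • V⁻¹) * (V * V * U)) := by
  have h' : V * U = (b * a) • (U * V) := by rw [mul_comm b, h]
  calc U * ((1 + a • V) * (1 + b • V))
      = b⁻¹ • ((1 + b • V⁻¹) * V * (U * (1 + b • V))) := by
        rw [← mul_assoc, mul_one_add_smul_of_mul_eq_smul hV hb h, smul_mul_assoc, mul_assoc _ U]
    _ = (a * b)⁻¹ • ((1 + b • V⁻¹) * (V * (1 + a • V⁻¹)) * (V * U)) := by
        rw [mul_one_add_smul_of_mul_eq_smul hV ha h', mul_smul_comm, smul_smul,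
          ← _root_.mul_inv_rev]
        simp only [mul_assoc]
    _ = (a * b)⁻¹ • ((1 + b • V⁻¹) * (1 + a • V⁻¹) * (V * V * U)) := by
        rw [(commute_one_add_smul_nonsing_inv hV a).eq]
        simp only [mul_assoc]

theorem one_add_smul_inv_inv_mul_mul_one_add_smul_mul_smul_inv {a b s : K} (hU : IsUnit U.det)
    (hV : IsUnit V.det) (ha : a ≠ 0) (hb : b ≠ 0) (h : V * U = (a * b) • (U * V))
    (hP : IsUnit (1 + a • V⁻¹).det) (hQ : IsUnit (1 + b • V⁻¹).det) :
    (1 + a • V⁻¹)⁻¹ * (1 + b • V⁻¹)⁻¹ * U * ((1 + a • V) * (1 + b • V) * (s • (U * V)⁻¹)) =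
      s • V := by
  have hUW : U * (U * V)⁻¹ = (a * b) • V⁻¹ := by
    rw [mul_inv_rev, ← mul_assoc, mul_nonsing_inv_eq_smul_of_mul_eq_smul hV h, smul_mul_assoc,
      mul_assoc, mul_nonsing_inv U hU, mul_one]
  have hPQ : (1 + a • V⁻¹)⁻¹ * (1 + b • V⁻¹)⁻¹ * ((1 + b • V⁻¹) * (1 + a • V⁻¹)) = 1 := by
    rw [mul_assoc, ← mul_assoc (1 + b • V⁻¹)⁻¹, nonsing_inv_mul _ hQ, one_mul,
      nonsing_inv_mul _ hP]
  calc (1 + a • V⁻¹)⁻¹ * (1 + b • V⁻¹)⁻¹ * U *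
        ((1 + a • V) * (1 + b • V) * (s • (U * V)⁻¹))
      = (1 + a • V⁻¹)⁻¹ * (1 + b • V⁻¹)⁻¹ * (U * ((1 + a • V) * (1 + b • V))) *
          (s • (U * V)⁻¹) := by
        simp only [mul_assoc]
    _ = (s * (a * b)⁻¹) • ((1 + a • V⁻¹)⁻¹ * (1 + b • V⁻¹)⁻¹ *
          ((1 + b • V⁻¹) * (1 + a • V⁻¹)) * (V * V * (U * (U * V)⁻¹))) := by
        rw [mul_one_add_smul_mul_one_add_smul_of_mul_eq_smul hV ha hb h]
        simp only [smul_mul_assoc, mul_smul_comm, smul_smul, mul_assoc]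
    _ = s • V := by
        rw [hPQ, hUW, one_mul, mul_smul_comm, smul_smul,
          mul_nonsing_inv_cancel_right (A := V) V hV, mul_assoc,
          inv_mul_cancel₀ (mul_ne_zero ha hb), mul_one]

end Matrix

section ChekhovFock

variable {N : ℕ}

theorem MV_pow (hN : 0 < N) (v : ℂ) (k : ℕ) :
    MV N v ^ k = of fun i j : Fin N => if (j : ℕ) = ((i : ℕ) + k) % N then v ^ k else 0 := by
  induction k with
  | zero =>
    ext i j
    simp [one_apply, Fin.ext_iff, Nat.mod_eq_of_lt i.isLt, eq_comm]
  | succ k ih =>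
    ext i j
    rw [pow_succ, ih]
    simp only [mul_apply, of_apply, MV]
    rw [Finset.sum_eq_single ⟨((i : ℕ) + k) % N, Nat.mod_lt _ hN⟩]
    · simp only [if_true, Nat.mod_add_mod, mul_ite, mul_zero, pow_succ, ← add_assoc]
    · intro l _ hl
      rw [if_neg fun hc => hl (Fin.ext hc), zero_mul]
    · exact fun h => (h (Finset.mem_univ _)).elim

theorem MV_pow_self (hN : 0 < N) (v : ℂ) : MV N v ^ N = v ^ N • 1 := by
  ext i j
  simp only [MV_pow hN, of_apply, Matrix.smul_apply, one_apply, smul_eq_mul, Nat.add_mod_right,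
    Nat.mod_eq_of_lt i.isLt, Fin.ext_iff, eq_comm (a := j.val), mul_ite, mul_one, mul_zero]

theorem MV_mul_MU {q : ℂ} (hq : q ^ N = 1) (u v : ℂ) :
    MV N v * MU N q u = q ^ 4 • (MU N q u * MV N v) := by
  ext i j
  simp only [MU, MV, mul_diagonal, diagonal_mul, Matrix.smul_apply, of_apply, smul_eq_mul]
  split_ifs with hj
  · rw [hj, pow_mul, ← pow_eq_pow_mod _ (by rw [← pow_mul, mul_comm, pow_mul, hq, one_pow]),
      pow_succ]
    ring
  · simp

theorem isUnit_det_MU {q u : ℂ} (hq : q ≠ 0) (hu : u ≠ 0) : IsUnit (MU N q u).det := by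
  rw [MU, det_diagonal, isUnit_iff_ne_zero, Finset.prod_ne_zero_iff]
  exact fun i _ => mul_ne_zero hu (pow_ne_zero _ hq)

theorem isUnit_det_MV (hN : 0 < N) {v : ℂ} (hv : v ≠ 0) : IsUnit (MV N v).det := by
  have hpow : (MV N v).det ^ N = (v ^ N) ^ N := by
    rw [← det_pow, MV_pow_self hN, det_smul, det_one, mul_one, Fintype.card_fin]
  rw [isUnit_iff_ne_zero]
  intro h0
  rw [h0, zero_pow hN.ne'] at hpow
  exact pow_ne_zero _ (pow_ne_zero _ hv) hpow.symm

theorem isUnit_det_one_add_smul_MV_inv (hN : Odd N) {d v : ℂ} (hd : d ^ N = 1) (hv : v ≠ 0)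
    (hvN : v ^ N ≠ -1) : IsUnit (1 + d • (MV N v)⁻¹).det := by
  have hvN0 : v ^ N ≠ 0 := pow_ne_zero _ hv
  have hpow : (d • (MV N v)⁻¹) ^ N = (v ^ N)⁻¹ • 1 := by
    rw [smul_pow, hd, one_smul, inv_pow', MV_pow_self hN.pos]
    refine inv_eq_left_inv ?_
    rw [smul_mul_smul, one_mul, inv_mul_cancel₀ hvN0, one_smul]
  have hw : 1 + (v ^ N)⁻¹ ≠ 0 := by
    intro h0
    rw [add_eq_zero_iff_neg_eq, eq_comm, inv_eq_iff_eq_inv, inv_neg, inv_one] at h0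
    exact hvN h0
  rw [← isUnit_iff_isUnit_det]
  exact isUnit_one_add_of_pow_eq_smul_one hN hpow hw

end ChekhovFock

theorem stmt10_general (N : ℕ) (hN : Odd N) (q : ℂ) (hq : IsPrimitiveRoot q N)
    (u v h : ℂ) (hu : u ≠ 0) (hv : v ≠ 0) (hvn : v ^ N ≠ -1)
    (LU LV LW : Matrix (Fin N) (Fin N) ℂ)
    (hLU : LU = (1 + q • (MV N v)⁻¹)⁻¹ * (1 + q ^ 3 • (MV N v)⁻¹)⁻¹ * MU N q u)
    (hLV : LV = (1 + q • MV N v) * (1 + q ^ 3 • MV N v) * MW N q u v h)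
    (hLW : LW = (MV N v)⁻¹) :
    LV * LU = q ^ 4 • (LU * LV) ∧
    LW * LV = q ^ 4 • (LV * LW) ∧
    LU * LW = q ^ 4 • (LW * LU) ∧
    q ^ 2 • (LU * LV * LW) = h • (1 : Matrix (Fin N) (Fin N) ℂ) := by
  have hq0 : q ≠ 0 := hq.ne_zero hN.pos.ne'
  have hqN : q ^ N = 1 := hq.pow_eq_one
  have hU := isUnit_det_MU (N := N) hq0 hu
  have hV := isUnit_det_MV hN.pos hv
  have hVU := MV_mul_MU hqN u v
  have hP := isUnit_det_one_add_smul_MV_inv hN hqN hv hvn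
  have hQ := isUnit_det_one_add_smul_MV_inv hN (d := q ^ 3)
    (by rw [← pow_mul, mul_comm, pow_mul, hqN, one_pow]) hv hvn
  have hcentral : LU * LV * LW = ((q ^ 2)⁻¹ * h) • 1 := by
    rw [hLU, hLV, hLW, MW, one_add_smul_inv_inv_mul_mul_one_add_smul_mul_smul_inv hU hV hq0
      (pow_ne_zero 3 hq0) (by rwa [← pow_succ']) hP hQ, smul_mul_assoc, mul_nonsing_inv _ hV]
  have hLULW : LU * LW = q ^ 4 • (LW * LU) := by
    rw [hLU, hLW]
    exact mul_mul_nonsing_inv_eq_smul_of_mul_eq_smul hV hVU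
      (((commute_one_add_smul_nonsing_inv hV q).nonsing_inv_nonsing_inv).mul_right
        (commute_one_add_smul_nonsing_inv hV (q ^ 3)).nonsing_inv_nonsing_inv)
  have hLU_unit : IsUnit LU := by
    rw [hLU, isUnit_iff_isUnit_det, det_mul, det_mul]
    exact ((isUnit_nonsing_inv_det _ hP).mul (isUnit_nonsing_inv_det _ hQ)).mul hU
  have hLW_unit : IsUnit LW := by
    rw [hLW, isUnit_iff_isUnit_det]
    exact isUnit_nonsing_inv_det _ hV
  obtain ⟨hLVLU, hLWLV⟩ :=
    mul_eq_smul_mul_swap_of_mul_mul_eq_smul_one hLU_unit hLW_unit hLULW hcentral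
  refine ⟨hLVLU, hLWLV, hLULW, ?_⟩
  rw [hcentral, smul_smul, mul_inv_cancel_left₀ (pow_ne_zero 2 hq0)]

/-- The images `L_U, L_V, L_W` of `U, V, W` under `χ_{u,v,h} ∘ ℒ` again satisfy the
Chekhov–Fock relations, with the same central element `q²·L_U·L_V·L_W = h`. -/
theorem stmt10 (N : ℕ) (hN : Odd N) (hNpos : 0 < N) (q : ℂ) (hq : IsPrimitiveRoot q N)
    (u v h : ℂ) (hu : u ≠ 0) (hv : v ≠ 0) (hh : h ≠ 0) (hvn : v ^ N ≠ -1)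
    (LU LV LW : Matrix (Fin N) (Fin N) ℂ)
    (hLU : LU = (1 + q • (MV N v)⁻¹)⁻¹ * (1 + q ^ 3 • (MV N v)⁻¹)⁻¹ * MU N q u)
    (hLV : LV = (1 + q • MV N v) * (1 + q ^ 3 • MV N v) * MW N q u v h)
    (hLW : LW = (MV N v)⁻¹) :
    LV * LU = q ^ 4 • (LU * LV) ∧
    LW * LV = q ^ 4 • (LV * LW) ∧
    LU * LW = q ^ 4 • (LW * LU) ∧
    q ^ 2 • (LU * LV * LW) = h • (1 : Matrix (Fin N) (Fin N) ℂ) :=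
  stmt10_general N hN q hq u v h hu hv hvn LU LV LW hLU hLV hLW
end

section
/- With N, q, and the matrix C_L = G·C̃_L as in the context, suppose u, v, h, u″, v″ are nonzero complex numbers with v^N ≠ −1, (u″)^N = u^N / (1 + v^{−N})², and (v″)^N = h^N·(1 + v^N)² / (u^N·v^N). Then the matrix C_L is invertible. -/
open Matrix

/-- The matrix `G` with `(i,j)`-entry `q^{4ij}`. -/
noncomputable def Gmat (N : ℕ) (q : ℂ) : Matrix (Fin N) (Fin N) ℂ :=
  Matrix.of fun i j => q ^ (4 * (i : ℕ) * (j : ℕ))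

/-- The matrix `C̃_L(u,v,u″,v″,h)` with `(i,j)`-entry
`q^{2(j−i)²+2i²}·(u″v″/(vh))^{j−i}·(uvv″/h)^i·∏_{α=1}^{i}[(1+q^{4α−3}v)(1+q^{4α−1}v)]⁻¹`. -/
noncomputable def CLtilde (N : ℕ) (q u v u'' v'' h : ℂ) : Matrix (Fin N) (Fin N) ℂ :=
  Matrix.of fun i j =>
    q ^ (2 * ((j : ℤ) - (i : ℤ)) ^ 2 + 2 * (i : ℤ) ^ 2) *
      (u'' * v'' / (v * h)) ^ ((j : ℤ) - (i : ℤ)) *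
      (u * v * v'' / h) ^ (i : ℕ) *
      ∏ α ∈ Finset.range (i : ℕ),
        ((1 + q ^ (4 * α + 1) * v) * (1 + q ^ (4 * α + 3) * v))⁻¹

/-- The intertwining matrix `C_L := G·C̃_L`. -/
noncomputable def CL (N : ℕ) (q u v u'' v'' h : ℂ) : Matrix (Fin N) (Fin N) ℂ :=
  Gmat N q * CLtilde N q u v u'' v'' h

/-!
Both factors of `C_L` are Vandermonde matrices up to invertible diagonal scalings: `G` in the
nodes `q^{4i}`, and `C̃_L` in the nodes `q^{-4i}`. Since `N` is odd, `q⁴` is again a primitive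
`N`-th root of unity, so the nodes are distinct. The diagonal entries are nonzero because
`1 + q^m v = 0` would give `v^N = (-1)^N = -1`.
-/

theorem IsPrimitiveRoot.det_vandermonde_pow_ne_zero {R : Type*} [CommRing R] [IsDomain R]
    {ζ : R} {n : ℕ} (hζ : IsPrimitiveRoot ζ n) :
    det (vandermonde fun i : Fin n => ζ ^ (i : ℕ)) ≠ 0 :=
  det_vandermonde_ne_zero_iff.mpr fun i j hij => Fin.ext (hζ.pow_inj i.isLt j.isLt hij)

theorem IsPrimitiveRoot.pow_four_of_odd {M : Type*} [CommMonoid M] {ζ : M} {n : ℕ}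
    (hζ : IsPrimitiveRoot ζ n) (hn : Odd n) : IsPrimitiveRoot (ζ ^ 4) n :=
  hζ.pow_of_coprime 4 (by simpa using (Nat.coprime_two_left.mpr hn).pow_left 2)

theorem one_add_pow_mul_ne_zero_s14 {R : Type*} [CommRing R] {N : ℕ} (hN : Odd N) {q v : R}
    (hq : q ^ N = 1) (hv : v ^ N ≠ -1) (m : ℕ) : 1 + q ^ m * v ≠ 0 := by
  intro h0
  have hqv : q ^ m * v = -1 := by linear_combination h0
  apply hv
  calc v ^ N = (q ^ m * v) ^ N := by
        rw [mul_pow, ← pow_mul, mul_comm m, pow_mul, hq, one_pow, one_mul]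
    _ = -1 := by rw [hqv, hN.neg_one_pow]

theorem Gmat_eq_vandermonde (N : ℕ) (q : ℂ) :
    Gmat N q = vandermonde fun i => (q ^ 4) ^ (i : ℕ) := by
  ext i j
  simp only [Gmat, of_apply, vandermonde_apply, ← pow_mul]

theorem det_Gmat_ne_zero {N : ℕ} (hN : Odd N) {q : ℂ} (hq : IsPrimitiveRoot q N) :
    (Gmat N q).det ≠ 0 := by
  rw [Gmat_eq_vandermonde]
  exact (hq.pow_four_of_odd hN).det_vandermonde_pow_ne_zero

/-- Expanding `2(j-i)² + 2i² = 4i² - 4ij + 2j²` separates the `i`- and `j`-dependence. -/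
theorem CLtilde_eq_diagonal_mul_vandermonde_mul_diagonal (N : ℕ) {q : ℂ} (hq : q ≠ 0)
    (u v u'' v'' h : ℂ) (hw : u'' * v'' / (v * h) ≠ 0) :
    CLtilde N q u v u'' v'' h =
      diagonal (fun i : Fin N => q ^ (4 * (i : ℕ) ^ 2) *
          (u * v * v'' / h / (u'' * v'' / (v * h))) ^ (i : ℕ) *
          ∏ α ∈ Finset.range (i : ℕ), ((1 + q ^ (4 * α + 1) * v) * (1 + q ^ (4 * α + 3) * v))⁻¹) *
        vandermonde (fun i : Fin N => (q ^ 4)⁻¹ ^ (i : ℕ)) *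
        diagonal (fun j : Fin N => q ^ (2 * (j : ℕ) ^ 2) * (u'' * v'' / (v * h)) ^ (j : ℕ)) := by
  ext i j
  have hexp : q ^ (2 * ((j : ℤ) - (i : ℤ)) ^ 2 + 2 * (i : ℤ) ^ 2)
      = q ^ (4 * (i : ℕ) ^ 2) * ((q ^ 4)⁻¹ ^ (i : ℕ)) ^ (j : ℕ) * q ^ (2 * (j : ℕ) ^ 2) := by
    rw [show 2 * ((j : ℤ) - (i : ℤ)) ^ 2 + 2 * (i : ℤ) ^ 2
        = ((4 * (i : ℕ) ^ 2 : ℕ) : ℤ) - ((4 * (i : ℕ) * (j : ℕ) : ℕ) : ℤ)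
          + ((2 * (j : ℕ) ^ 2 : ℕ) : ℤ) by push_cast; ring,
      zpow_add₀ hq, zpow_sub₀ hq]
    simp only [zpow_natCast, inv_pow, ← pow_mul, div_eq_mul_inv, mul_assoc]
  have hw_zpow : (u'' * v'' / (v * h)) ^ ((j : ℤ) - (i : ℤ))
      = (u'' * v'' / (v * h)) ^ (j : ℕ) * ((u'' * v'' / (v * h)) ^ (i : ℕ))⁻¹ := by
    rw [zpow_sub₀ hw, zpow_natCast, zpow_natCast, div_eq_mul_inv]
  simp only [CLtilde, of_apply, mul_diagonal, diagonal_mul, vandermonde_apply]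
  rw [hexp, hw_zpow, div_pow _ (u'' * v'' / (v * h))]
  ring

theorem det_CLtilde_ne_zero {N : ℕ} (hN : Odd N) {q : ℂ} (hq : IsPrimitiveRoot q N)
    {u v h u'' v'' : ℂ} (hu : u ≠ 0) (hv : v ≠ 0) (hh : h ≠ 0) (hu'' : u'' ≠ 0) (hv'' : v'' ≠ 0)
    (hvn : v ^ N ≠ -1) : (CLtilde N q u v u'' v'' h).det ≠ 0 := by
  have hq0 : q ≠ 0 := hq.ne_zero hN.pos.ne'
  have hfactor (m : ℕ) : 1 + q ^ m * v ≠ 0 := one_add_pow_mul_ne_zero_s14 hN hq.pow_eq_one hvn m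
  rw [CLtilde_eq_diagonal_mul_vandermonde_mul_diagonal N hq0 u v u'' v'' h (by positivity),
    det_mul, det_mul, det_diagonal, det_diagonal]
  refine mul_ne_zero (mul_ne_zero (Finset.prod_ne_zero_iff.mpr fun i _ => ?_)
    (hq.pow_four_of_odd hN).inv.det_vandermonde_pow_ne_zero)
    (Finset.prod_ne_zero_iff.mpr fun j _ => by positivity)
  refine mul_ne_zero (by positivity) (Finset.prod_ne_zero_iff.mpr fun α _ => ?_)
  exact inv_ne_zero (mul_ne_zero (hfactor _) (hfactor _))

theorem stmt14_general (N : ℕ) (hN : Odd N) (q : ℂ) (hq : IsPrimitiveRoot q N)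
    (u v h u'' v'' : ℂ) (hu : u ≠ 0) (hv : v ≠ 0) (hh : h ≠ 0)
    (hu'' : u'' ≠ 0) (hv'' : v'' ≠ 0) (hvn : v ^ N ≠ -1) :
    IsUnit (CL N q u v u'' v'' h) := by
  rw [isUnit_iff_isUnit_det, isUnit_iff_ne_zero, CL, det_mul]
  exact mul_ne_zero (det_Gmat_ne_zero hN hq) (det_CLtilde_ne_zero hN hq hu hv hh hu'' hv'' hvn)

/-- The matrix `C_L` is invertible. -/
theorem stmt14 (N : ℕ) (hN : Odd N) (hNpos : 0 < N) (q : ℂ) (hq : IsPrimitiveRoot q N)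
    (u v h u'' v'' : ℂ) (hu : u ≠ 0) (hv : v ≠ 0) (hh : h ≠ 0)
    (hu'' : u'' ≠ 0) (hv'' : v'' ≠ 0) (hvn : v ^ N ≠ -1)
    (hu''N : u'' ^ N = u ^ N / (1 + (v ^ N)⁻¹) ^ 2)
    (hv''N : v'' ^ N = h ^ N * (1 + v ^ N) ^ 2 / (u ^ N * v ^ N)) :
    IsUnit (CL N q u v u'' v'' h) :=
  stmt14_general N hN q hq u v h u'' v'' hu hv hh hu'' hv'' hvn
end
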